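/- arXiv:1609.08530 — 3 statements merged into one kernel-verified Lean document; each statement's English description precedes it below -/
import Mathlib

section
/- (Generalized Cauchy–Vandermonde determinant, absolute value form) Let 0 ≤ k ≤ l = n−k with k ≤ l, let z₁,…,z_k and w₁,…,w_l be real numbers with all z_i distinct, all w_j distinct, and z_i ≠ w_j. Let D be the l×l matrix with D_{ij} = w_j^{i−1} for 1 ≤ i ≤ l−k and D_{ij} = 1/(z_{i−l+k} − w_j) for l−k < i ≤ l. Then |det D| = ∏_{1≤i<j≤k}|z_i−z_j| · ∏_{1≤i<j≤l}|w_i−w_j| · ∏_{1≤i≤k,1≤j≤l}|z_i−w_j|^{−1}. -/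
/-!
Multiplying column `j` of `D` by `P(w_j)`, where `P = ∏_t (z_t - X)`, turns `D` into the
(transposed) evaluation matrix `(Q_q(w_p))` of the polynomials `Q_a = X^a P` for `a < l - k` and
`Q_{l-k+b} = ∏_{t ≠ b} (z_t - X)`, all of degree `< l`. Such an evaluation matrix factors as the
Vandermonde matrix of the nodes times the coefficient matrix of the `Q`'s, so
`det (Q_q(x_p)) / det V(x)` does not depend on the nodes `x`. At the nodes
`(w_1, …, w_{l-k}, z_1, …, z_k)` the evaluation matrix is block triangular, which computes this
ratio and gives `det D · ∏_{t,j} (z_t - w_j) = ∏_{i<j} (z_i - z_j) · det V(w)`.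
-/

open Finset Polynomial

theorem Fin.prod_prod_Ioi_add {M : Type*} [CommMonoid M] {m k : ℕ}
    (G : Fin (m + k) → Fin (m + k) → M) :
    ∏ i, ∏ j ∈ Ioi i, G i j =
      (∏ a, ∏ b ∈ Ioi a, G (castAdd k a) (castAdd k b)) *
        (∏ a, ∏ b ∈ Ioi a, G (natAdd m a) (natAdd m b)) *
          ∏ a, ∏ b, G (castAdd k a) (natAdd m b) := by
  have hlt (a : Fin m) (b : Fin k) : (a : ℕ) < m + b := by omega
  have hgt (a : Fin k) (b : Fin m) : ¬ m + (a : ℕ) < b := by omega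
  simp only [← filter_lt_eq_Ioi, prod_filter, Fin.prod_univ_add, Fin.lt_def, val_castAdd,
    val_natAdd, hlt, hgt, Nat.add_lt_add_iff_left, if_true, if_false, prod_const_one,
    prod_mul_distrib]
  ac_rfl

theorem Polynomial.natDegree_prod_C_sub_X_le {R ι : Type*} [CommRing R] (s : Finset ι)
    (z : ι → R) : (∏ t ∈ s, (C (z t) - X)).natDegree ≤ #s := by
  refine (natDegree_prod_le _ _).trans <| (sum_le_card_nsmul _ _ 1 fun t _ => ?_).trans (by simp)
  rw [← neg_sub, natDegree_neg]
  exact natDegree_X_sub_C_le _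

namespace Matrix

variable {R : Type*} [CommRing R]

theorem det_vandermonde_append {m k : ℕ} (u : Fin m → R) (s : Fin k → R) :
    (vandermonde (Fin.append u s)).det =
      (vandermonde u).det * (vandermonde s).det * ∏ a, ∏ b, (s b - u a) := by
  simp only [det_vandermonde, Fin.prod_prod_Ioi_add, Fin.append_left, Fin.append_right]

theorem prod_prod_compl_sub_eq_det_vandermonde_mul {n : ℕ} (v : Fin n → R) :
    ∏ a, ∏ t ∈ {a}ᶜ, (v t - v a) = (vandermonde v).det * ∏ i, ∏ j ∈ Ioi i, (v i - v j) := by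
  rw [← prod_prod_Ioi_mul_eq_prod_prod_off_diag, det_vandermonde, ← prod_mul_distrib]
  simp only [prod_mul_distrib]

theorem det_of_eval_eq_det_vandermonde_mul {n : ℕ} (x : Fin n → R) (Q : Fin n → R[X])
    (hQ : ∀ q, (Q q).natDegree < n) :
    (of fun p q => (Q q).eval (x p)).det =
      (vandermonde x).det * (of fun r q : Fin n => (Q q).coeff r).det := by
  rw [← det_mul]
  congr 1
  ext p q
  rw [mul_apply, of_apply, eval_eq_sum_range' (hQ q), ← Fin.sum_univ_eq_sum_range]
  simp [vandermonde, mul_comm]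

theorem det_of_eval_mul_det_vandermonde_comm {n : ℕ} (Q : Fin n → R[X])
    (hQ : ∀ q, (Q q).natDegree < n) (x x' : Fin n → R) :
    (of fun p q => (Q q).eval (x p)).det * (vandermonde x').det =
      (of fun p q => (Q q).eval (x' p)).det * (vandermonde x).det := by
  rw [det_of_eval_eq_det_vandermonde_mul x Q hQ, det_of_eval_eq_det_vandermonde_mul x' Q hQ]
  ring

end Matrix

open Matrix

section CauchyVandermonde

variable {K : Type*} [Field K] {m k : ℕ}

def cauchyVandermonde (z : Fin k → K) (w : Fin (m + k) → K) :
    Matrix (Fin (m + k)) (Fin (m + k)) K :=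
  of fun i j => Fin.append (fun a : Fin m => w j ^ (a : ℕ)) (fun b => (z b - w j)⁻¹) i

noncomputable def cauchyVandermondePoly (m : ℕ) (z : Fin k → K) : Fin (m + k) → K[X] :=
  Fin.append (fun a : Fin m => X ^ (a : ℕ) * ∏ t, (C (z t) - X))
    (fun b => ∏ t ∈ {b}ᶜ, (C (z t) - X))

theorem natDegree_cauchyVandermondePoly_lt (z : Fin k → K) (q : Fin (m + k)) :
    (cauchyVandermondePoly m z q).natDegree < m + k := by
  induction q using Fin.addCases with
  | left a =>
    simp only [cauchyVandermondePoly, Fin.append_left]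
    calc _ ≤ (X ^ (a : ℕ) : K[X]).natDegree + (∏ t, (C (z t) - X)).natDegree :=
          natDegree_mul_le
      _ ≤ a + k := by
          grw [natDegree_X_pow_le, natDegree_prod_C_sub_X_le, card_univ, Fintype.card_fin]
      _ < m + k := by omega
  | right b =>
    simp only [cauchyVandermondePoly, Fin.append_right]
    grw [natDegree_prod_C_sub_X_le, card_compl, card_singleton, Fintype.card_fin]
    have := b.isLt
    omega

theorem eval_cauchyVandermondePoly {z : Fin k → K} {x : K} (hx : ∀ t, z t ≠ x)
    (q : Fin (m + k)) :
    (cauchyVandermondePoly m z q).eval x =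
      (∏ t, (z t - x)) * Fin.append (fun a : Fin m => x ^ (a : ℕ)) (fun b => (z b - x)⁻¹) q := by
  induction q using Fin.addCases with
  | left a => simp [cauchyVandermondePoly, eval_prod, mul_comm]
  | right b =>
    simp only [cauchyVandermondePoly, Fin.append_right, eval_prod, eval_sub, eval_C, eval_X,
      Fintype.prod_eq_mul_prod_compl b fun t => z t - x]
    field_simp [sub_ne_zero.mpr (hx b)]

theorem det_eval_cauchyVandermondePoly {z : Fin k → K} {w : Fin (m + k) → K}
    (hzw : ∀ i j, z i ≠ w j) :
    (of fun p q => (cauchyVandermondePoly m z q).eval (w p)).det =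
      (∏ p, ∏ t, (z t - w p)) * (cauchyVandermonde z w).det := by
  have h : (of fun p q => (cauchyVandermondePoly m z q).eval (w p)) =
      of fun p q => (∏ t, (z t - w p)) * (cauchyVandermonde z w)ᵀ p q := by
    ext p q
    simp [eval_cauchyVandermondePoly fun t => hzw t p, cauchyVandermonde]
  rw [h, det_mul_column, det_transpose]

theorem det_eval_cauchyVandermondePoly_append (z : Fin k → K) (y : Fin m → K) :
    (of fun p q => (cauchyVandermondePoly m z q).eval (Fin.append y z p)).det =
      (∏ a, ∏ t, (z t - y a)) * (vandermonde y).det * ∏ a, ∏ t ∈ {a}ᶜ, (z t - z a) := by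
  have h : (of fun p q => (cauchyVandermondePoly m z q).eval (Fin.append y z p)).submatrix
        finSumFinEquiv finSumFinEquiv =
      fromBlocks (of fun a b => (∏ t, (z t - y a)) * vandermonde y a b)
        (of fun a b => ∏ t ∈ {b}ᶜ, (z t - y a))
        0 (diagonal fun a => ∏ t ∈ {a}ᶜ, (z t - z a)) := by
    ext (a | a) (b | b)
    · simp [cauchyVandermondePoly, eval_prod, vandermonde_apply, mul_comm]
    · simp [cauchyVandermondePoly, eval_prod]
    · simp [cauchyVandermondePoly, eval_prod, prod_eq_zero (mem_univ a)]
    · by_cases hab : a = b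
      · subst hab
        simp [cauchyVandermondePoly, eval_prod]
      · simp [cauchyVandermondePoly, eval_prod, hab]
        exact prod_eq_zero (by simpa using hab) (sub_self _)
  rw [← det_submatrix_equiv_self finSumFinEquiv, h, det_fromBlocks_zero₂₁, det_diagonal,
    det_mul_column]

theorem det_cauchyVandermonde {z : Fin k → K} {w : Fin (m + k) → K}
    (hz : Function.Injective z) (hw : Function.Injective w) (hzw : ∀ i j, z i ≠ w j) :
    (cauchyVandermonde z w).det =
      (∏ i, ∏ j ∈ Ioi i, (z i - z j)) * (∏ i, ∏ j ∈ Ioi i, (w j - w i)) *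
        ∏ i, ∏ j, (z i - w j)⁻¹ := by
  -- Any `m` nodes distinct from each other and from the `z`'s would do here.
  set y : Fin m → K := fun a => w (Fin.castAdd k a)
  have hcomm := det_of_eval_mul_det_vandermonde_comm (cauchyVandermondePoly m z)
    (natDegree_cauchyVandermondePoly_lt z) w (Fin.append y z)
  rw [det_eval_cauchyVandermondePoly hzw, det_eval_cauchyVandermondePoly_append,
    det_vandermonde_append, prod_prod_compl_sub_eq_det_vandermonde_mul] at hcomm
  have hy : (vandermonde y).det ≠ 0 :=
    det_vandermonde_ne_zero_iff.mpr (hw.comp (Fin.castAdd_injective m k))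
  have hz' : (vandermonde z).det ≠ 0 := det_vandermonde_ne_zero_iff.mpr hz
  have hzy : ∏ a, ∏ t, (z t - y a) ≠ 0 :=
    prod_ne_zero_iff.mpr fun a _ => prod_ne_zero_iff.mpr fun t _ => sub_ne_zero.mpr (hzw t _)
  have hzw' : ∏ p, ∏ t, (z t - w p) ≠ 0 :=
    prod_ne_zero_iff.mpr fun p _ => prod_ne_zero_iff.mpr fun t _ => sub_ne_zero.mpr (hzw t p)
  have key : (∏ p, ∏ t, (z t - w p)) * (cauchyVandermonde z w).det =
      (∏ i, ∏ j ∈ Ioi i, (z i - z j)) * (vandermonde w).det :=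
    mul_left_cancel₀ (mul_ne_zero (mul_ne_zero hy hz') hzy) (by linear_combination hcomm)
  rw [← det_vandermonde, prod_comm (f := fun i j => (z i - w j)⁻¹)]
  simp only [prod_inv_distrib]
  field_simp
  linear_combination key

theorem of_dite_eq_cauchyVandermonde (z : Fin k → K) (w : Fin (m + k) → K) :
    (of fun i j : Fin (m + k) =>
        if h : (i : ℕ) < m + k - k then (w j) ^ (i : ℕ)
        else (z ⟨(i : ℕ) - (m + k - k), by omega⟩ - w j)⁻¹) = cauchyVandermonde z w := by
  ext i j
  induction i using Fin.addCases with
  | left a => simp [cauchyVandermonde]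
  | right b => simp [cauchyVandermonde]

end CauchyVandermonde

/-- Generalized Cauchy–Vandermonde determinant (absolute value form):
for the l×l matrix whose first l−k rows are the Vandermonde block `wⱼ^(i-1)` and whose
last k rows are the Cauchy block `1/(zᵢ − wⱼ)`,
|det D| = ∏_{i<j}|zᵢ−zⱼ| · ∏_{i<j}|wᵢ−wⱼ| · ∏_{i,j}|zᵢ−wⱼ|⁻¹. -/
theorem cauchy_vandermonde_det_abs (k l : ℕ) (hkl : k ≤ l)
    (z : Fin k → ℝ) (w : Fin l → ℝ)
    (hz : Function.Injective z) (hw : Function.Injective w)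
    (hzw : ∀ i j, z i ≠ w j) :
    |Matrix.det (Matrix.of fun i j : Fin l =>
        if h : (i : ℕ) < l - k then (w j) ^ (i : ℕ)
        else (z ⟨(i : ℕ) - (l - k), by omega⟩ - w j)⁻¹)|
      = (∏ i : Fin k, ∏ j ∈ Finset.Ioi i, |z i - z j|)
        * (∏ i : Fin l, ∏ j ∈ Finset.Ioi i, |w i - w j|)
        * ∏ i : Fin k, ∏ j : Fin l, |z i - w j|⁻¹ := by
  obtain ⟨m, rfl⟩ : ∃ m, l = m + k := ⟨l - k, by omega⟩
  rw [of_dite_eq_cauchyVandermonde, det_cauchyVandermonde hz hw hzw]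
  simp only [abs_mul, abs_prod, abs_inv]
  congr 2
  exact prod_congr rfl fun i _ => prod_congr rfl fun j _ => abs_sub_comm _ _
end

section
/- For all natural numbers n and all 0 ≤ k ≤ ⌊n/2⌋, and every p ≥ 1: (1/n!) · C(n,k) · (C(n−k, n−2k) · k!)^{1/p} ≤ ⌊n/2⌋ / (⌊n/2⌋!)^{1−1/p}, and hence the sum over k from 0 to ⌊n/2⌋ of the left-hand side summands is bounded by ⌊n/2⌋ / (⌊n/2⌋!)^{1−1/p} up to the stated estimate: ∑_{k=0}^{⌊n/2⌋} (1/((n−k)!·k!)) · ((n−k)!/(n−2k)!)^{1/p} ≤ ⌊n/2⌋ / (⌊n/2⌋!)^{1−1/p}. -/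
/-!
Write `m = ⌊n/2⌋` and `e = 1/p ∈ (0, 1]`. Dropping the denominator `(n-2k)!` and using
`(n-k)! ≥ m!` bounds the `k`-th summand by `m!^(e-1) / k!`, so the summands with `k ≥ 1`
add up to at most `m!^(e-1) (exp 1 - 1)`. The summand `k = 0` equals `1/n!`, and
`n! ≥ (m+2)! ≥ 9 m!` makes it at most `m!^(e-1) / 9`. Since `exp 1 - 1 + 1/9 < 2 ≤ m`, the
sum is at most `m · m!^(e-1) = m / m!^(1-e)`.
-/

open Finset Real
open scoped Nat

theorem one_div_mul_div_rpow_le {a b c x e : ℝ} (hb : 0 < b) (hba : b ≤ a) (hc : 1 ≤ c)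
    (hx : 0 < x) (he0 : 0 ≤ e) (he1 : e ≤ 1) :
    1 / (a * x) * (a / c) ^ e ≤ b ^ (e - 1) / x := by
  have ha : 0 < a := hb.trans_le hba
  calc 1 / (a * x) * (a / c) ^ e ≤ 1 / (a * x) * a ^ e := by
        gcongr
        exact div_le_self ha.le hc
    _ = a ^ (e - 1) / x := by
        rw [rpow_sub_one ha.ne']
        field_simp
    _ ≤ b ^ (e - 1) / x :=
        div_le_div_of_nonneg_right (rpow_le_rpow_of_nonpos hb hba (by linarith)) hx.le

theorem one_div_factorial_mul_rpow_le {n m k : ℕ} (hmk : m + k ≤ n) {e : ℝ} (he0 : 0 ≤ e)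
    (he1 : e ≤ 1) :
    1 / (((n - k)! : ℝ) * k !) * (((n - k)! : ℝ) / (n - 2 * k)!) ^ e
      ≤ (m ! : ℝ) ^ (e - 1) / k ! :=
  one_div_mul_div_rpow_le (by positivity) (mod_cast Nat.factorial_le (by omega))
    (mod_cast Nat.factorial_pos _) (by positivity) he0 he1

theorem sum_range_one_div_factorial_succ_le (m : ℕ) :
    ∑ k ∈ range m, 1 / ((k + 1)! : ℝ) ≤ exp 1 - 1 := by
  have h := sum_le_exp_of_nonneg zero_le_one (m + 1)
  rw [sum_range_succ'] at h
  simp only [one_pow, pow_zero, Nat.factorial_zero, Nat.cast_one, div_one] at h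
  linarith

theorem nine_mul_factorial_le {m n : ℕ} (hm : 2 ≤ m) (hmn : m + 2 ≤ n) : 9 * m ! ≤ n ! :=
  calc 9 * m ! ≤ m ! * (m + 1) ^ 2 := by rw [mul_comm]; gcongr; nlinarith
    _ ≤ (m + 2)! := Nat.factorial_mul_pow_le_factorial
    _ ≤ n ! := Nat.factorial_le hmn

theorem one_div_le_rpow_sub_one {x e : ℝ} (hx : 1 ≤ x) (he : 0 ≤ e) :
    1 / x ≤ x ^ (e - 1) := by
  simpa [rpow_neg_one] using rpow_le_rpow_of_exponent_le hx (show (-1 : ℝ) ≤ e - 1 by linarith)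

theorem one_div_factorial_le_rpow_sub_one_div_nine {m n : ℕ} (hm : 2 ≤ m) (hmn : m + 2 ≤ n)
    {e : ℝ} (he : 0 ≤ e) : 1 / (n ! : ℝ) ≤ (m ! : ℝ) ^ (e - 1) / 9 :=
  calc 1 / (n ! : ℝ) ≤ 1 / (9 * m ! : ℝ) := by
        gcongr
        exact_mod_cast nine_mul_factorial_le hm hmn
    _ ≤ (m ! : ℝ) ^ (e - 1) / 9 := by
        rw [mul_comm, ← div_div]
        gcongr
        exact one_div_le_rpow_sub_one (mod_cast m.factorial_pos) he

theorem sum_range_one_div_factorial_mul_rpow_succ_le {n m : ℕ} (hmn : 2 * m ≤ n) {e : ℝ}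
    (he0 : 0 ≤ e) (he1 : e ≤ 1) :
    ∑ k ∈ range m, 1 / (((n - (k + 1))! : ℝ) * (k + 1)!)
        * (((n - (k + 1))! : ℝ) / (n - 2 * (k + 1))!) ^ e
      ≤ (m ! : ℝ) ^ (e - 1) * (exp 1 - 1) :=
  calc _ ≤ ∑ k ∈ range m, (m ! : ℝ) ^ (e - 1) / (k + 1)! :=
        sum_le_sum fun k hk ↦
          one_div_factorial_mul_rpow_le (by rw [mem_range] at hk; omega) he0 he1
    _ = (m ! : ℝ) ^ (e - 1) * ∑ k ∈ range m, 1 / ((k + 1)! : ℝ) := by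
        simp only [mul_sum, mul_one_div]
    _ ≤ (m ! : ℝ) ^ (e - 1) * (exp 1 - 1) := by
        gcongr
        exact sum_range_one_div_factorial_succ_le m

/-- The combinatorial factorial estimate: for n ≥ 4 and p ≥ 1,
∑_{k=0}^{⌊n/2⌋} 1/((n−k)!·k!) · ((n−k)!/(n−2k)!)^{1/p} ≤ ⌊n/2⌋/(⌊n/2⌋!)^{1−1/p}. -/
theorem factorial_sum_estimate (p : ℝ) (hp : 1 ≤ p) (n : ℕ) (hn : 4 ≤ n) :
    ∑ k ∈ Finset.range (n / 2 + 1),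
        (1 / ((Nat.factorial (n - k) : ℝ) * (Nat.factorial k : ℝ)))
          * ((Nat.factorial (n - k) : ℝ) / (Nat.factorial (n - 2 * k) : ℝ)) ^ (1 / p)
      ≤ ((n / 2 : ℕ) : ℝ) / ((Nat.factorial (n / 2) : ℝ)) ^ (1 - 1 / p) := by
  set m := n / 2
  have he0 : 0 ≤ 1 / p := by positivity
  have he1 : 1 / p ≤ 1 := (div_le_one (by linarith)).2 hp
  have head :
      1 / ((n ! : ℝ) * 0 !) * ((n ! : ℝ) / n !) ^ (1 / p) ≤ (m ! : ℝ) ^ (1 / p - 1) / 9 := by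
    rw [div_self (by positivity), one_rpow, Nat.factorial_zero, Nat.cast_one, mul_one,
      mul_one]
    exact one_div_factorial_le_rpow_sub_one_div_nine (by omega) (by omega) he0
  rw [sum_range_succ', Nat.sub_zero]
  calc _ ≤ (m ! : ℝ) ^ (1 / p - 1) * (exp 1 - 1) + (m ! : ℝ) ^ (1 / p - 1) / 9 :=
        add_le_add (sum_range_one_div_factorial_mul_rpow_succ_le (by omega) he0 he1) head
    _ = (m ! : ℝ) ^ (1 / p - 1) * (exp 1 - 1 + 1 / 9) := by ring
    _ ≤ (m ! : ℝ) ^ (1 / p - 1) * m := by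
        gcongr
        have hm : (2 : ℝ) ≤ m := mod_cast (show 2 ≤ m by omega)
        linarith [exp_one_lt_d9]
    _ = m / (m ! : ℝ) ^ (1 - 1 / p) := by
        rw [mul_comm, ← neg_sub, rpow_neg (by positivity), div_eq_mul_inv (m : ℝ)]
end

section
/- For x = (t, 𝐱) ∈ ℝ² with t² ≠ 𝐱², the limit as ε ↘ 0 of −(1/(4π))·log(−t²+𝐱²+iεt) equals −(1/(4π))·log|t²−𝐱²| − (i/4)·sgn(t)·θ(t²−𝐱²), where log is the principal branch of the complex logarithm. -/
open Filter

/-- Heaviside step function with the convention `θ 0 = 1`. -/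
noncomputable def heaviside (s : ℝ) : ℝ := if 0 ≤ s then 1 else 0

/-! Writing `a = -t² + x²`, the argument `a + iεt` of the logarithm tends to the real number `a`.
Spacelike (`a > 0`): `log` is continuous at `a`, so the limit is `log a`. Timelike (`a < 0`, hence
`t ≠ 0`): the path approaches the branch cut from the half-plane on the side of `sgn t`, where the
principal logarithm has the one-sided boundary values `log |a| ± iπ`; the factor `-1/(4π)` turns
`± iπ` into `∓ i/4`. -/

open Topology

namespace Complex

theorem tendsto_ofReal_add_I_mul (a c : ℝ) :
    Tendsto (fun ε : ℝ => (a : ℂ) + I * ε * c) (𝓝[>] 0) (𝓝 (a : ℂ)) := by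
  have hcont : ContinuousAt (fun ε : ℝ => (a : ℂ) + I * ε * c) 0 := by fun_prop
  simpa using hcont.continuousWithinAt.tendsto

theorem tendsto_ofReal_add_I_mul_nhdsWithin (a c : ℝ) {s : Set ℂ}
    (hs : ∀ ε : ℝ, 0 < ε → (a : ℂ) + I * ε * c ∈ s) :
    Tendsto (fun ε : ℝ => (a : ℂ) + I * ε * c) (𝓝[>] 0) (𝓝[s] (a : ℂ)) :=
  tendsto_nhdsWithin_of_tendsto_nhds_of_eventually_within _ (tendsto_ofReal_add_I_mul a c)
    (eventually_nhdsWithin_of_forall hs)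

theorem im_ofReal_add_I_mul (a ε c : ℝ) : ((a : ℂ) + I * ε * c).im = ε * c := by
  simp

theorem tendsto_log_ofReal_add_I_mul_of_pos {a : ℝ} (ha : 0 < a) (c : ℝ) :
    Tendsto (fun ε : ℝ => log (a + I * ε * c)) (𝓝[>] 0) (𝓝 (Real.log a)) := by
  have hlog : ContinuousAt log (a : ℂ) :=
    continuousAt_clog (ofReal_mem_slitPlane.mpr ha)
  rw [ofReal_log ha.le]
  exact hlog.tendsto.comp (tendsto_ofReal_add_I_mul a c)

theorem tendsto_log_ofReal_add_I_mul_of_neg {a c : ℝ} (ha : a < 0) (hc : c ≠ 0) :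
    Tendsto (fun ε : ℝ => log (a + I * ε * c)) (𝓝[>] 0)
      (𝓝 (Real.log |a| + Real.sign c * Real.pi * I)) := by
  have hre : (a : ℂ).re < 0 := by simpa using ha
  have him : (a : ℂ).im = 0 := ofReal_im a
  rcases hc.lt_or_gt with hc | hc
  · have hpath := tendsto_ofReal_add_I_mul_nhdsWithin a c (s := {z : ℂ | z.im < 0})
      fun ε hε => by
        rw [Set.mem_ofPred_eq, im_ofReal_add_I_mul]
        exact mul_neg_of_pos_of_neg hε hc
    have hval : (Real.log |a| : ℂ) + Real.sign c * Real.pi * I =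
        Real.log ‖(a : ℂ)‖ - Real.pi * I := by
      rw [Real.sign_of_neg hc, norm_real, Real.norm_eq_abs]
      push_cast
      ring
    rw [hval]
    exact (tendsto_log_nhdsWithin_im_neg_of_re_neg_of_im_zero hre him).comp hpath
  · have hpath := tendsto_ofReal_add_I_mul_nhdsWithin a c (s := {z : ℂ | 0 ≤ z.im})
      fun ε hε => by
        rw [Set.mem_ofPred_eq, im_ofReal_add_I_mul]
        exact (mul_pos hε hc).le
    have hval : (Real.log |a| : ℂ) + Real.sign c * Real.pi * I =
        Real.log ‖(a : ℂ)‖ + Real.pi * I := by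
      rw [Real.sign_of_pos hc, norm_real, Real.norm_eq_abs]
      push_cast
      ring
    rw [hval]
    exact (tendsto_log_nhdsWithin_im_nonneg_of_re_neg_of_im_zero hre him).comp hpath

end Complex

theorem heaviside_of_neg {s : ℝ} (hs : s < 0) : heaviside s = 0 := if_neg hs.not_ge

theorem heaviside_of_nonneg {s : ℝ} (hs : 0 ≤ s) : heaviside s = 1 := if_pos hs

theorem tendsto_log_add_I_mul_boundary_value (t x : ℝ) (h : t ^ 2 ≠ x ^ 2) :
    Tendsto (fun ε : ℝ => Complex.log (((-t ^ 2 + x ^ 2 : ℝ) : ℂ) + Complex.I * ε * t))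
      (𝓝[>] 0)
      (𝓝 (Real.log |t ^ 2 - x ^ 2| + Real.sign t * heaviside (t ^ 2 - x ^ 2) * Real.pi
        * Complex.I)) := by
  have habs : |t ^ 2 - x ^ 2| = |-t ^ 2 + x ^ 2| := by rw [← abs_neg]; ring_nf
  rcases h.lt_or_gt with hspace | htime
  · have hpos : 0 < -t ^ 2 + x ^ 2 := by linarith
    convert Complex.tendsto_log_ofReal_add_I_mul_of_pos hpos t using 2
    rw [heaviside_of_neg (sub_neg.mpr hspace), habs, abs_of_pos hpos]
    simp
  · have ht : t ≠ 0 := by rintro rfl; nlinarith [sq_nonneg x]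
    have hneg : -t ^ 2 + x ^ 2 < 0 := by linarith
    convert Complex.tendsto_log_ofReal_add_I_mul_of_neg hneg ht using 2
    rw [heaviside_of_nonneg (sub_nonneg.mpr htime.le), habs]
    simp

/-- Boundary value of the 2D massless two-point function: off the light cone,
lim_{ε↘0} −(1/4π) log(−t²+x²+iεt) = −(1/4π) log|t²−x²| − (i/4) sgn(t) θ(t²−x²). -/
theorem twoPointFunction_boundary_value (t x : ℝ) (h : t ^ 2 ≠ x ^ 2) :
    Tendsto (fun ε : ℝ =>
        -(1 / (4 * (Real.pi : ℂ))) *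
          Complex.log (((-t ^ 2 + x ^ 2 : ℝ) : ℂ) + Complex.I * (ε : ℂ) * (t : ℂ)))
      (nhdsWithin 0 (Set.Ioi 0))
      (nhds (-(1 / (4 * (Real.pi : ℂ))) * ((Real.log |t ^ 2 - x ^ 2| : ℝ) : ℂ)
        - Complex.I / 4 * ((Real.sign t : ℝ) : ℂ)
            * ((heaviside (t ^ 2 - x ^ 2) : ℝ) : ℂ))) := by
  convert (tendsto_log_add_I_mul_boundary_value t x h).const_mul
    (-(1 / (4 * (Real.pi : ℂ)))) using 2
  have hpi : (Real.pi : ℂ) ≠ 0 := Complex.ofReal_ne_zero.mpr Real.pi_ne_zero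
  field_simp
  ring
end
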